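/- arXiv:1908.01635 — 2 statements merged into one kernel-verified Lean document; each statement's English description precedes it below -/
import Mathlib

section
/- Let F be a Kripke frame and N a finite rooted n-model. Then F ⊭ β(N) (i.e., β(N) fails at some point of some model on F) if and only if there is a color-consistent monotonic map from the unraveling T_N of N into F. -/
/-! ## Formulas of intuitionistic propositional logic -/

inductive Formula : Type
  | bot : Formula
  | var : ℕ → Formula
  | and : Formula → Formula → Formula
  | or  : Formula → Formula → Formula
  | imp : Formula → Formula → Formula
  deriving DecidableEq

namespace Formula

def top : Formula := imp bot bot

def iff_ (φ ψ : Formula) : Formula := and (imp φ ψ) (imp ψ φ)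

/-- `φ` contains no implication at all. -/
def noImp : Formula → Prop
  | bot => True
  | var _ => True
  | and φ ψ => noImp φ ∧ noImp ψ
  | or φ ψ => noImp φ ∧ noImp ψ
  | imp _ _ => False

/-- NNIL-formulas: no nesting of implications to the left. -/
def IsNNIL : Formula → Prop
  | bot => True
  | var _ => True
  | and φ ψ => IsNNIL φ ∧ IsNNIL ψ
  | or φ ψ => IsNNIL φ ∧ IsNNIL ψ
  | imp φ ψ => noImp φ ∧ IsNNIL ψ

/-- `φ` is an `n`-formula: all its propositional variables are among `p_0, …, p_{n-1}`. -/
def varsBelow (n : ℕ) : Formula → Prop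
  | bot => True
  | var p => p < n
  | and φ ψ => varsBelow n φ ∧ varsBelow n ψ
  | or φ ψ => varsBelow n φ ∧ varsBelow n ψ
  | imp φ ψ => varsBelow n φ ∧ varsBelow n ψ

/-- the propositional variable `p` occurs in the formula -/
def occurs (p : ℕ) : Formula → Prop
  | bot => False
  | var q => q = p
  | and φ ψ => occurs p φ ∨ occurs p ψ
  | or φ ψ => occurs p φ ∨ occurs p ψ
  | imp φ ψ => occurs p φ ∨ occurs p ψ

/-- uniform substitution -/
def subst (σ : ℕ → Formula) : Formula → Formula
  | bot => bot
  | var p => σ p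
  | and φ ψ => and (subst σ φ) (subst σ ψ)
  | or φ ψ => or (subst σ φ) (subst σ ψ)
  | imp φ ψ => imp (subst σ φ) (subst σ ψ)

end Formula

/-- finite conjunction (empty conjunction is ⊤) -/
def listAnd : List Formula → Formula
  | [] => Formula.top
  | φ :: l => Formula.and φ (listAnd l)

/-- finite disjunction (empty disjunction is ⊥) -/
def listOr : List Formula → Formula
  | [] => Formula.bot
  | φ :: l => Formula.or φ (listOr l)

/-! ## Kripke structures, models and satisfaction -/

/-- raw Kripke structure: worlds, relation, Boolean valuation -/
structure KStruct where
  W : Type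
  R : W → W → Prop
  V : W → ℕ → Bool

namespace KStruct

/-- a Kripke model: `R` is a partial order and `V` is persistent -/
def IsModel (M : KStruct) : Prop :=
  (∀ w, M.R w w) ∧
  (∀ w u v, M.R w u → M.R u v → M.R w v) ∧
  (∀ w u, M.R w u → M.R u w → w = u) ∧
  (∀ w u p, M.R w u → M.V w p = true → M.V u p = true)

/-- an `n`-model: a Kripke model whose valuation is restricted to the variables `p_0,…,p_{n-1}` -/
def IsNModel (M : KStruct) (n : ℕ) : Prop :=
  M.IsModel ∧ ∀ w p, n ≤ p → M.V w p = false

/-- intuitionistic satisfaction -/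
def sat (M : KStruct) : M.W → Formula → Prop
  | _, Formula.bot => False
  | w, Formula.var p => M.V w p = true
  | w, Formula.and φ ψ => M.sat w φ ∧ M.sat w ψ
  | w, Formula.or φ ψ => M.sat w φ ∨ M.sat w ψ
  | w, Formula.imp φ ψ => ∀ u, M.R w u → M.sat u φ → M.sat u ψ

/-- the submodel on a subset of the worlds -/
def restrict (M : KStruct) (S : Set M.W) : KStruct where
  W := S
  R := fun a b => M.R a.1 b.1
  V := fun a p => M.V a.1 p

end KStruct

/-- monotonic map between Kripke structures: preserves the order and the colors -/
def Monotonic (M N : KStruct) (f : M.W → N.W) : Prop :=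
  (∀ w u, M.R w u → N.R (f w) (f u)) ∧ (∀ w p, N.V (f w) p = M.V w p)

/-- p-morphism: a monotonic map satisfying the forth condition -/
def PMorphism (M N : KStruct) (f : M.W → N.W) : Prop :=
  Monotonic M N f ∧ ∀ w u', N.R (f w) u' → ∃ u, M.R w u ∧ f u = u'

/-- MR: the class of formulas reflected by monotonic maps between Kripke models -/
def MR (φ : Formula) : Prop :=
  ∀ (N M : KStruct), N.IsModel → M.IsModel →
    ∀ f : N.W → M.W, Monotonic N M f → ∀ w : N.W, M.sat (f w) φ → N.sat w φ

/-- `r` is a root of `M` -/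
def IsRoot (M : KStruct) (r : M.W) : Prop := ∀ w, M.R r w

/-- `M` is tree-like with root `r`: rooted, and each point has a finite,
linearly ordered set of predecessors -/
def IsTree (M : KStruct) (r : M.W) : Prop :=
  IsRoot M r ∧ (∀ w : M.W, {u | M.R u w}.Finite) ∧
  (∀ w u v : M.W, M.R u w → M.R v w → (M.R u v ∨ M.R v u))

/-- `u` is an immediate (proper) successor of `w` -/
def ImmSucc (M : KStruct) (w u : M.W) : Prop :=
  M.R w u ∧ w ≠ u ∧ ∀ v, M.R w v → M.R v u → v = w ∨ v = u

/-- `S` carries a color-preserving submodel of `M` -/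
def ColorPresSub (M : KStruct) (S : Set M.W) : Prop :=
  ∀ w ∈ S, ∀ u, M.R w u → ∃ v ∈ S, M.R w v ∧ ∀ p, M.V v p = M.V u p

/-! ## The β-formulas of finite models -/

/-- the variables among `p_0,…,p_{n-1}` true at `w` -/
def propList (M : KStruct) (n : ℕ) (w : M.W) : List Formula :=
  ((List.range n).filter (fun p => M.V w p)).map Formula.var

/-- the variables among `p_0,…,p_{n-1}` false at `w` -/
def notpropList (M : KStruct) (n : ℕ) (w : M.W) : List Formula :=
  ((List.range n).filter (fun p => !(M.V w p))).map Formula.var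

open Classical in
/-- the immediate successors of `w`, as a list -/
noncomputable def immSuccList (M : KStruct) [Fintype M.W] (w : M.W) : List M.W :=
  (Finset.univ.filter (fun u => ImmSucc M w u)).toList

/-- β(w), defined by recursion on the depth of `w` (computed with enough fuel):
`β(w) = ⋀prop(w) → (⋁notprop(w) ∨ β(w_1) ∨ … ∨ β(w_k))` where the `w_i` are the
immediate successors of `w` (for maximal `w` the last disjunct is the empty disjunction). -/
noncomputable def betaFuel (M : KStruct) [Fintype M.W] (n : ℕ) : ℕ → M.W → Formula
  | 0, _ => Formula.bot
  | (k+1), w =>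
      Formula.imp (listAnd (propList M n w))
        (listOr (notpropList M n w ++ (immSuccList M w).map (fun u => betaFuel M n k u)))

/-- β(w) for a point `w` of a finite `n`-model: `Fintype.card M.W` is an upper bound
for the depth of any point, so the recursion above never runs out of fuel. -/
noncomputable def beta (M : KStruct) [inst : Fintype M.W] (n : ℕ) (w : M.W) : Formula :=
  betaFuel M n (Fintype.card M.W) w

/-! ## Unravelings -/

/-- the unraveling `T_N` of a rooted model `(N, r)`: points are the finite sequences
`⟨r, w_1, …, w_k⟩` in which each entry is an immediate successor of the preceding one,
ordered by the initial-segment relation; such a sequence satisfies the same variables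
as its last entry. -/
def Unravel (M : KStruct) (r : M.W) : KStruct where
  W := {l : List M.W // l.head? = some r ∧ List.Chain' (ImmSucc M) l}
  R := fun σ τ => σ.1 <+: τ.1
  V := fun σ p => (σ.1.getLast?.map (fun w => M.V w p)).getD false

/-! ## Kripke frames -/

structure KFrame where
  W : Type
  R : W → W → Prop

namespace KFrame

/-- a Kripke frame: `R` is a partial order -/
def IsFrame (F : KFrame) : Prop :=
  (∀ w, F.R w w) ∧ (∀ w u v, F.R w u → F.R u v → F.R w v) ∧
  (∀ w u, F.R w u → F.R u w → w = u)

def Persistent (F : KFrame) (V : F.W → ℕ → Bool) : Prop :=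
  ∀ w u p, F.R w u → V w p = true → V u p = true

/-- the model on `F` given by a valuation -/
def model (F : KFrame) (V : F.W → ℕ → Bool) : KStruct := ⟨F.W, F.R, V⟩

/-- `F ⊨ φ` : `φ` is true at every point of every model on `F` -/
def valid (F : KFrame) (φ : Formula) : Prop :=
  ∀ V, F.Persistent V → ∀ w, (F.model V).sat w φ

/-- the substructure of `F` on a subset `S` of its domain, with the restricted order -/
def restrictF (F : KFrame) (S : Set F.W) : KFrame :=
  ⟨S, fun a b => F.R a.1 b.1⟩

end KFrame

/-- a monotonic map from a model `N` into a frame `F` which is color-consistent: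
`f(w) R f(u)` implies `col(w) ≤ col(u)` -/
def ColorConsistentMap (N : KStruct) (F : KFrame) (f : N.W → F.W) : Prop :=
  (∀ w u, N.R w u → F.R (f w) (f u)) ∧
  (∀ w u, F.R (f w) (f u) → ∀ p, N.V w p = true → N.V u p = true)

/-!
If `x₀` refutes `β(r) = ⋀prop(r) → ⋁notprop(r) ∨ ⋁ β(w_i)` in a model on `F`, some
`x ≥ x₀` has the color of `r` and refutes every `β(w_i)`; repeating this along the paths
of `T_N` assigns to each path a point of `F` with the color of its last entry,
monotonically, and persistence of the valuation makes the map color-consistent. Since an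
`N`-chain has at most `|N|` points, the fuel `|N|` of `β` never runs out along the way.

Conversely, a color-consistent `f` induces the valuation `x ⊨ p ↔ ∃ σ, f σ ≤ x ∧ σ ⊨ p`.
Under it `f σ` has exactly the color of `σ`, color consistency makes `⋁notprop` fail at
`f σ`, and by induction on the fuel `f σ` refutes `β` of the last entry of `σ`.
-/

namespace KStruct

lemma sat_listAnd (M : KStruct) (w : M.W) (L : List Formula) :
    M.sat w (listAnd L) ↔ ∀ φ ∈ L, M.sat w φ := by
  induction L with
  | nil => simp [listAnd, Formula.top, sat]
  | cons φ l ih => simp [listAnd, sat, ih]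

lemma sat_listOr (M : KStruct) (w : M.W) (L : List Formula) :
    M.sat w (listOr L) ↔ ∃ φ ∈ L, M.sat w φ := by
  induction L with
  | nil => simp [listOr, sat]
  | cons φ l ih => simp [listOr, sat, ih]

end KStruct

lemma KFrame.sat_mono {F : KFrame} (htrans : ∀ x y z, F.R x y → F.R y z → F.R x z)
    {V : F.W → ℕ → Bool} (hV : F.Persistent V) (φ : Formula) {x y : F.W} (hxy : F.R x y)
    (hx : (F.model V).sat x φ) : (F.model V).sat y φ := by
  induction φ generalizing x y with
  | bot => exact hx
  | var p => exact hV x y p hxy hx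
  | and φ ψ ihφ ihψ => exact ⟨ihφ hxy hx.1, ihψ hxy hx.2⟩
  | or φ ψ ihφ ihψ => exact hx.imp (ihφ hxy) (ihψ hxy)
  | imp φ ψ => exact fun u hyu => hx u (htrans x y u hxy hyu)

lemma mem_immSuccList {M : KStruct} [Fintype M.W] {w u : M.W} :
    u ∈ immSuccList M w ↔ ImmSucc M w u := by
  simp [immSuccList]

def BetaRefuter (M N : KStruct) [Fintype N.W] (n : ℕ) (u : M.W) (w : N.W) (k : ℕ) : Prop :=
  (∀ p < n, M.V u p = N.V w p) ∧ ∀ w', ImmSucc N w w' → ¬ M.sat u (betaFuel N n k w')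

lemma not_sat_betaFuel_succ_iff (M N : KStruct) [Fintype N.W] (n k : ℕ) (x : M.W) (w : N.W) :
    ¬ M.sat x (betaFuel N n (k + 1) w) ↔ ∃ u, M.R x u ∧ BetaRefuter M N n u w k := by
  simp only [betaFuel, KStruct.sat, KStruct.sat_listAnd, KStruct.sat_listOr, BetaRefuter,
    propList, notpropList, List.mem_append, List.mem_map, List.mem_filter, List.mem_range,
    mem_immSuccList, forall_exists_index, and_imp, or_and_right, exists_or,
    exists_exists_and_eq_and]
  push Not
  refine exists_congr fun u => and_congr_right fun _ => ?_
  rw [← and_assoc]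
  refine and_congr_left fun _ => ⟨fun ⟨hpos, hneg⟩ p hp => ?_, fun h => ⟨?_, ?_⟩⟩
  · cases hw : N.V w p
    · simpa [hw] using hneg p ⟨hp, by simp [hw]⟩
    · exact hpos _ p hp hw rfl
  · rintro _ p hp hw rfl
    simp [KStruct.sat, h p hp, hw]
  · rintro p ⟨hp, hw⟩
    simpa [h p hp] using hw

namespace Unravel

variable {N : KStruct} {r : N.W}

lemma ne_nil (σ : (Unravel N r).W) : σ.1 ≠ [] := by
  rintro h
  simpa [h] using σ.2.1

def last (σ : (Unravel N r).W) : N.W := σ.1.getLast (ne_nil σ)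

lemma getLast?_eq (σ : (Unravel N r).W) : σ.1.getLast? = some (last σ) :=
  List.getLast?_eq_some_getLast (ne_nil σ)

lemma V_eq (σ : (Unravel N r).W) (p : ℕ) : (Unravel N r).V σ p = N.V (last σ) p := by
  simp [Unravel, getLast?_eq]

variable (N r) in
def root : (Unravel N r).W := ⟨[r], rfl, List.isChain_singleton r⟩

def snoc (σ : (Unravel N r).W) (w : N.W) (hw : ImmSucc N (last σ) w) : (Unravel N r).W :=
  ⟨σ.1 ++ [w], by rw [List.head?_append_of_ne_nil _ (ne_nil σ)]; exact σ.2.1,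
    σ.2.2.append (List.isChain_singleton w) (by simpa [getLast?_eq] using hw)⟩

lemma last_snoc (σ : (Unravel N r).W) (w : N.W) (hw : ImmSucc N (last σ) w) :
    last (snoc σ w hw) = w :=
  List.getLast_append_singleton _

lemma R_snoc (σ : (Unravel N r).W) (w : N.W) (hw : ImmSucc N (last σ) w) :
    (Unravel N r).R σ (snoc σ w hw) :=
  ⟨[w], rfl⟩

end Unravel

section ColorConsistentToRefutation

variable {N : KStruct} {F : KFrame}

open Classical in
/-- The least persistent valuation on `F` making `f` color-preserving. -/
noncomputable def imageValuation (f : N.W → F.W) : F.W → ℕ → Bool :=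
  fun x p => decide (∃ w, F.R (f w) x ∧ N.V w p = true)

lemma persistent_imageValuation (htrans : ∀ x y z, F.R x y → F.R y z → F.R x z)
    (f : N.W → F.W) : F.Persistent (imageValuation f) := by
  intro x y p hxy
  simpa [imageValuation] using fun w hwx hw => ⟨w, htrans _ _ _ hwx hxy, hw⟩

lemma ColorConsistentMap.imageValuation_apply (hrefl : ∀ x, F.R x x) {f : N.W → F.W}
    (hf : ColorConsistentMap N F f) (w : N.W) (p : ℕ) : imageValuation f (f w) p = N.V w p := by
  rw [Bool.eq_iff_iff]
  simp only [imageValuation, decide_eq_true_eq]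
  exact ⟨fun ⟨u, hu, hup⟩ => hf.2 u w hu p hup, fun hw => ⟨w, hrefl _, hw⟩⟩

lemma ColorConsistentMap.not_sat_betaFuel [Fintype N.W] {r : N.W} (n : ℕ)
    (hrefl : ∀ x, F.R x x) (htrans : ∀ x y z, F.R x y → F.R y z → F.R x z)
    {f : (Unravel N r).W → F.W} (hf : ColorConsistentMap (Unravel N r) F f) (k : ℕ)
    (σ : (Unravel N r).W) :
    ¬ (F.model (imageValuation f)).sat (f σ) (betaFuel N n k (Unravel.last σ)) := by
  induction k generalizing σ with
  | zero => exact id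
  | succ k ih =>
    refine (not_sat_betaFuel_succ_iff _ N n k _ _).2
      ⟨f σ, hrefl _, fun p _ => ?_, fun w hw hsat => ?_⟩
    · exact (hf.imageValuation_apply hrefl σ p).trans (Unravel.V_eq σ p)
    · have hτ := ih (Unravel.snoc σ w hw)
      rw [Unravel.last_snoc] at hτ
      exact hτ (KFrame.sat_mono htrans (persistent_imageValuation htrans f) _
        (hf.1 _ _ (Unravel.R_snoc σ w hw)) hsat)

end ColorConsistentToRefutation

lemma length_le_card_of_isChain_immSucc {N : KStruct} [Fintype N.W]
    (htrans : ∀ w u v, N.R w u → N.R u v → N.R w v)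
    (hantisymm : ∀ w u, N.R w u → N.R u w → w = u)
    {l : List N.W} (hl : l.IsChain (ImmSucc N)) : l.length ≤ Fintype.card N.W := by
  let lt : N.W → N.W → Prop := fun a b => N.R a b ∧ a ≠ b
  have : IsTrans N.W lt := ⟨fun a b c hab hbc => ⟨htrans _ _ _ hab.1 hbc.1, by
    rintro rfl
    exact hab.2 (hantisymm _ _ hab.1 hbc.1)⟩⟩
  have hlt : l.Pairwise lt := List.isChain_iff_pairwise.1 (hl.imp fun a b h => ⟨h.1, h.2.1⟩)
  exact List.Nodup.length_le_card (hlt.imp fun h => h.2)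

section RefutationToColorConsistent

variable {N : KStruct} [Fintype N.W] {n : ℕ} {F : KFrame} {V : F.W → ℕ → Bool}

variable (N n V) in
open Classical in
noncomputable def refutationStep (x : F.W) (w : N.W) (k : ℕ) : F.W :=
  if h : ∃ u, F.R x u ∧ BetaRefuter (F.model V) N n u w k then h.choose else x

lemma refutationStep_spec {x : F.W} {w : N.W} {k : ℕ}
    (h : ¬ (F.model V).sat x (betaFuel N n (k + 1) w)) :
    BetaRefuter (F.model V) N n (refutationStep N n V x w k) w k := by
  have hex : ∃ u, F.R x u ∧ BetaRefuter (F.model V) N n u w k :=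
    (not_sat_betaFuel_succ_iff (F.model V) N n k x w).1 h
  rw [refutationStep, dif_pos hex]
  exact hex.choose_spec.2

lemma R_refutationStep (hrefl : ∀ x, F.R x x) (x : F.W) (w : N.W) (k : ℕ) :
    F.R x (refutationStep N n V x w k) := by
  unfold refutationStep
  split_ifs with h
  exacts [h.choose_spec.1, hrefl x]

variable (N n V) in
/-- The point `⟨r, w_1, …, w_k⟩` of the unraveling is handled as the reversed list
`w_k :: … :: w_1 :: [r]`, so that each entry adds one refutation step; `K` is the fuel
of `β(r)`. -/
noncomputable def refutationPath (x₀ : F.W) (K : ℕ) : List N.W → F.W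
  | [] => x₀
  | w :: m => refutationStep N n V (refutationPath x₀ K m) w (K - (m.length + 1))

lemma refutationPath_mono (hrefl : ∀ x, F.R x x)
    (htrans : ∀ x y z, F.R x y → F.R y z → F.R x z) (x₀ : F.W) (K : ℕ) {m' m : List N.W}
    (h : m' <:+ m) : F.R (refutationPath N n V x₀ K m') (refutationPath N n V x₀ K m) := by
  induction m with
  | nil => rw [List.suffix_nil.1 h]; exact hrefl _
  | cons w m ih =>
    rcases List.suffix_cons_iff.1 h with rfl | h
    · exact hrefl _
    · exact htrans _ _ _ (ih h) (R_refutationStep hrefl _ w _)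

lemma refutationPath_spec {r : N.W} {x₀ : F.W} {K : ℕ}
    (hx₀ : ¬ (F.model V).sat x₀ (betaFuel N n K r)) (m : List N.W)
    (hm : m.IsChain (fun a b => ImmSucc N b a)) (hlast : m.getLast? = some r)
    (hlen : m.length ≤ K) :
    ∀ w ∈ m.head?,
      BetaRefuter (F.model V) N n (refutationPath N n V x₀ K m) w (K - m.length) := by
  induction m with
  | nil => simp
  | cons w m ih =>
    rintro _ ⟨⟩
    rcases m with _ | ⟨w₂, m⟩
    · obtain rfl : w = r := by simpa using hlast
      have hK : K - 1 + 1 = K := by simp only [List.length_singleton] at hlen; omega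
      exact refutationStep_spec (hK ▸ hx₀)
    · obtain ⟨himm, hm⟩ := List.isChain_cons_cons.1 hm
      have hK : K - (w₂ :: m).length = K - (w :: w₂ :: m).length + 1 := by
        simp only [List.length_cons] at hlen ⊢; omega
      have hlen' : (w₂ :: m).length ≤ K := by simp only [List.length_cons] at hlen ⊢; omega
      have hw := (ih hm (by simpa using hlast) hlen' w₂ rfl).2 w himm
      exact refutationStep_spec (hK ▸ hw)

lemma exists_colorConsistentMap_of_not_sat (hrefl : ∀ x, F.R x x)
    (htrans : ∀ x y z, F.R x y → F.R y z → F.R x z) (hN : N.IsNModel n) (hV : F.Persistent V)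
    {r : N.W} {x₀ : F.W} (hx₀ : ¬ (F.model V).sat x₀ (beta N n r)) :
    ∃ f : (Unravel N r).W → F.W, ColorConsistentMap (Unravel N r) F f := by
  let f : (Unravel N r).W → F.W := fun σ =>
    refutationPath N n V x₀ (Fintype.card N.W) σ.1.reverse
  have hcolor : ∀ σ, ∀ p < n, V (f σ) p = N.V (Unravel.last σ) p := by
    intro σ
    have hlen : σ.1.reverse.length ≤ Fintype.card N.W := by
      simpa using length_le_card_of_isChain_immSucc hN.1.2.1 hN.1.2.2.1 σ.2.2
    refine (refutationPath_spec hx₀ σ.1.reverse (List.isChain_reverse.2 σ.2.2)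
      (by simpa using σ.2.1) hlen _ ?_).1
    simp [Unravel.getLast?_eq]
  refine ⟨f, fun σ τ hστ => refutationPath_mono hrefl htrans _ _ (List.reverse_suffix.2 hστ),
      fun σ τ hστ p hp => ?_⟩
  rw [Unravel.V_eq] at hp ⊢
  have hpn : p < n := by
    by_contra hpn
    simp [hN.2 _ p (by omega)] at hp
  rw [← hcolor σ p hpn] at hp
  rw [← hcolor τ p hpn]
  exact hV _ _ p hστ hp

end RefutationToColorConsistent

theorem beta_frame_refutation_via_color_consistent_maps_general
    (n : ℕ) (F : KFrame) (hF : F.IsFrame)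
    (N : KStruct) [Fintype N.W] (hN : N.IsNModel n) (r : N.W) :
    (¬ F.valid (beta N n r)) ↔
      ∃ f : (Unravel N r).W → F.W, ColorConsistentMap (Unravel N r) F f := by
  obtain ⟨hrefl, htrans, -⟩ := hF
  constructor
  · intro hnot
    obtain ⟨V, hV, x₀, hx₀⟩ :
        ∃ V, F.Persistent V ∧ ∃ x₀, ¬ (F.model V).sat x₀ (beta N n r) := by
      simpa [KFrame.valid] using hnot
    exact exists_colorConsistentMap_of_not_sat hrefl htrans hN hV hx₀
  · rintro ⟨f, hf⟩ hvalid
    exact hf.not_sat_betaFuel n hrefl htrans _ (Unravel.root N r)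
      (hvalid _ (persistent_imageValuation htrans f) _)

/-- `F ⊭ β(N)` iff there is a color-consistent monotonic map from the
unraveling `T_N` of `N` into the frame `F`. -/
theorem beta_frame_refutation_via_color_consistent_maps
    (n : ℕ) (F : KFrame) (hF : F.IsFrame)
    (N : KStruct) [Fintype N.W] (hN : N.IsNModel n) (r : N.W) (hr : IsRoot N r) :
    (¬ F.valid (beta N n r)) ↔
      ∃ f : (Unravel N r).W → F.W, ColorConsistentMap (Unravel N r) F f :=
  beta_frame_refutation_via_color_consistent_maps_general n F hF N hN r
end

section
/- For every node T_w of the n-universal model T(n) and every NNIL-formula φ in the variables p_1,…,p_n: φ is true at the root w of the tree T_w (evaluated inside the model T_w) if and only if φ is true at the node T_w in the model T(n). -/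
/-! ## The n-universal model 𝒯(n) for NNIL -/

/-- an `n`-color -/
abbrev Col (n : ℕ) := Fin n → Bool

/-- componentwise order on colors -/
def ColLE {n : ℕ} (c d : Col n) : Prop := ∀ i, c i = true → d i = true

def ColLT {n : ℕ} (c d : Col n) : Prop := ColLE c d ∧ c ≠ d

/-- finite colored trees: a root color together with the list of subtrees
hanging above the root -/
inductive CTree (n : ℕ) : Type
  | node : Col n → List (CTree n) → CTree n

namespace CTree

variable {n : ℕ}

def color : CTree n → Col n
  | node c _ => c

def children : CTree n → List (CTree n)
  | node _ ts => ts

/-- the subtree of `t` at a position (a list of child indices) -/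
def subt : List ℕ → CTree n → Option (CTree n)
  | [], t => some t
  | i :: l, t => (t.children[i]?).bind (subt l)

/-- the finite tree-like `n`-model determined by a colored tree: its worlds are
the positions of `t`, ordered by the initial-segment relation, and a position
satisfies `p_i` iff the color of the subtree there is `1` at `i`. -/
def toModel (t : CTree n) : KStruct where
  W := {l : List ℕ // (subt l t).isSome = true}
  R := fun a b => a.1 <+: b.1
  V := fun a p =>
    if h : p < n then ((subt a.1 t).map (fun s => s.color ⟨p, h⟩)).getD false
    else false

/-- the root of the model of a tree -/
def root (t : CTree n) : t.toModel.W := ⟨[], rfl⟩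

/-- an injective code of colors -/
def colCode (c : Col n) : ℕ := ∑ i : Fin n, (if c i then 2 ^ (i : ℕ) else 0)

/-- an injective code of lists of numbers -/
def listCode : List ℕ → ℕ
  | [] => 0
  | a :: l => Nat.pair a (listCode l) + 1

/-- an injective code of colored trees, used to order the children of every node of a
tree in the universal model canonically -/
def code : CTree n → ℕ
  | node c ts => Nat.pair (colCode c) (listCode (ts.attach.map (fun x => code x.1)))
decreasing_by
  have := List.sizeOf_lt_of_mem x.2
  simp only [CTree.node.sizeOf_spec]
  omega

end CTree

/-- `MLE s t` (`s ≤ t`): there is a monotonic map from (the model of) `t` into `s` -/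
def MLE {n : ℕ} (s t : CTree n) : Prop :=
  ∃ f : t.toModel.W → s.toModel.W, Monotonic t.toModel s.toModel f

/-- membership in the domain of the universal model `𝒯(n)`, built in layers:
layer 1 consists of the one-point trees (one for each color); a tree of a later layer
is built from a set `X` of pairwise `≤`-incomparable trees of earlier layers (encoded
as a list sorted canonically by `code`) by adding a fresh root below whose color is
strictly smaller than every color occurring in the trees of `X`. -/
inductive UMem : {n : ℕ} → CTree n → Prop
  | single {n : ℕ} (c : Col n) : UMem (CTree.node c [])
  | step {n : ℕ} (c : Col n) (ts : List (CTree n)) :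
      ts ≠ [] →
      (∀ t ∈ ts, UMem t) →
      List.Chain' (fun a b => CTree.code a < CTree.code b) ts →
      (∀ t ∈ ts, ∀ s ∈ ts, t ≠ s → ¬ MLE t s) →
      (∀ t ∈ ts, ∀ (l : List ℕ) (s : CTree n), CTree.subt l t = some s →
        ColLT c s.color) →
      UMem (CTree.node c ts)

/-- the universal model `𝒯(n)`: its points are the trees in `UMem`, ordered by `≤`
(where `T_w ≤ T_u` iff there is a monotonic map from `T_u` into `T_w`), and the color
of a node is the color of the root of the corresponding tree. -/
def UnivModel (n : ℕ) : KStruct where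
  W := {t : CTree n // UMem t}
  R := fun a b => MLE a.1 b.1
  V := fun a p => if h : p < n then a.1.color ⟨p, h⟩ else false

/-- mutual monotonic mappability (`≡`) of Kripke structures -/
def MEquiv (A B : KStruct) : Prop :=
  (∃ f : B.W → A.W, Monotonic B A f) ∧ (∃ g : A.W → B.W, Monotonic A B g)


/-
Sending a position `u` of `t` to the subtree at `u` is a monotonic map from `t` into `𝒯(n)`
taking the root to the node `t`; as NNIL-formulas are reflected by monotonic maps, truth at
the node gives truth at the root. The converse is by induction on the formula, and the case
`φ → ψ` (with `φ` implication-free) is the real one: if `s ≥ t` in `𝒯(n)` satisfies `φ` and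
`f` maps `s` monotonically into `t`, then `φ`, depending only on colours, holds at `f` of the
root of `s`, hence so does `ψ`, which reflects back along `f` to the root of `s` and, by the
induction hypothesis, to the node `s`.
-/

namespace KStruct

theorem sat_iff_of_noImp {φ : Formula} (h : φ.noImp) {M N : KStruct} {w : M.W} {u : N.W}
    (hV : ∀ p, M.V w p = N.V u p) : M.sat w φ ↔ N.sat u φ := by
  induction φ with
  | bot => rfl
  | var p => exact iff_of_eq (congrArg (· = true) (hV p))
  | and _ _ ihφ ihψ => exact and_congr (ihφ h.1) (ihψ h.2)
  | or _ _ ihφ ihψ => exact or_congr (ihφ h.1) (ihψ h.2)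
  | imp => exact h.elim

theorem sat_of_monotonic {φ : Formula} (hφ : φ.IsNNIL) {N M : KStruct} {f : N.W → M.W}
    (hf : Monotonic N M f) {w : N.W} (hw : M.sat (f w) φ) : N.sat w φ := by
  induction φ generalizing w with
  | bot => exact hw
  | var p => exact (hf.2 w p).symm.trans hw
  | and _ _ ihφ ihψ => exact ⟨ihφ hφ.1 hw.1, ihψ hφ.2 hw.2⟩
  | or _ _ ihφ ihψ => exact hw.imp (ihφ hφ.1) (ihψ hφ.2)
  | imp _ _ _ ihψ =>
    intro u hwu hu
    have hfu := (sat_iff_of_noImp hφ.1 (hf.2 u)).mpr hu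
    exact ihψ hφ.2 (hw (f u) (hf.1 w u hwu) hfu)

end KStruct

theorem UMem.subt {n : ℕ} {t s : CTree n} (ht : UMem t) {l : List ℕ}
    (hl : CTree.subt l t = some s) : UMem s := by
  induction l generalizing t with
  | nil => exact Option.some_injective _ hl ▸ ht
  | cons i l ih =>
    obtain ⟨c, hc, hcs⟩ := Option.bind_eq_some_iff.mp hl
    cases ht with
    | single => simp [CTree.children] at hc
    | step _ _ _ hchildren => exact ih (hchildren c (List.mem_of_getElem? hc)) hcs

namespace CTree

variable {n : ℕ}

theorem subt_append (a b : List ℕ) (t : CTree n) :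
    subt (a ++ b) t = (subt a t).bind (subt b) := by
  induction a generalizing t with
  | nil => rfl
  | cons i a ih =>
    simp only [List.cons_append, subt, Option.bind_assoc]
    cases t.children[i]? <;> simp [ih]

def shift {t s : CTree n} {u : List ℕ} (hu : subt u t = some s) :
    s.toModel.W → t.toModel.W :=
  fun l => ⟨u ++ l.1, by rw [subt_append, hu]; exact l.2⟩

theorem monotonic_shift {t s : CTree n} {u : List ℕ} (hu : subt u t = some s) :
    Monotonic s.toModel t.toModel (shift hu) := by
  refine ⟨fun _ _ h => List.prefix_append_right_inj u |>.mpr h, fun l p => ?_⟩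
  simp only [toModel, shift, subt_append, hu, Option.bind_some]

theorem mle_of_subt {t s : CTree n} {u : List ℕ} (hu : subt u t = some s) : MLE t s :=
  ⟨shift hu, monotonic_shift hu⟩

/-- The position `u` of `t` as the node `T_u` of `𝒯(n)`. -/
def toUniv (t : CTree n) (ht : UMem t) (u : t.toModel.W) : (UnivModel n).W :=
  ⟨(subt u.1 t).get u.2, ht.subt (Option.some_get u.2).symm⟩

theorem monotonic_toUniv (t : CTree n) (ht : UMem t) :
    Monotonic t.toModel (UnivModel n) (t.toUniv ht) := by
  refine ⟨fun u v ⟨c, hc⟩ => mle_of_subt (u := c) ?_, fun u p => ?_⟩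
  · obtain ⟨s, hs⟩ := Option.isSome_iff_exists.mp u.2
    simp [toUniv, ← hc, subt_append, hs]
  · obtain ⟨s, hs⟩ := Option.isSome_iff_exists.mp u.2
    simp [UnivModel, toModel, toUniv, hs]

theorem sat_univModel_of_sat_root {φ : Formula} (hφ : φ.IsNNIL) (t : CTree n) (ht : UMem t)
    (h : t.toModel.sat t.root φ) : (UnivModel n).sat ⟨t, ht⟩ φ := by
  have hcolor (s : CTree n) (hs : UMem s) (p : ℕ) :
      s.toModel.V s.root p = (UnivModel n).V ⟨s, hs⟩ p :=
    ((monotonic_toUniv s hs).2 s.root p).symm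
  induction φ generalizing t ht with
  | bot => exact h
  | var p => exact (hcolor t ht p).symm.trans h
  | and _ _ ihφ ihψ => exact ⟨ihφ hφ.1 t ht h.1, ihψ hφ.2 t ht h.2⟩
  | or _ _ ihφ ihψ => exact h.imp (ihφ hφ.1 t ht) (ihψ hφ.2 t ht)
  | imp _ _ _ ihψ =>
    rintro ⟨s, hs⟩ ⟨f, hf⟩ hsφ
    have hrootφ := (KStruct.sat_iff_of_noImp hφ.1 (hcolor s hs)).mpr hsφ
    have hfφ := (KStruct.sat_iff_of_noImp hφ.1 (hf.2 s.root)).mpr hrootφ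
    have hfψ := h (f s.root) List.nil_prefix hfφ
    exact ihψ hφ.2 s hs (KStruct.sat_of_monotonic hφ.2 hf hfψ)

end CTree

theorem univ_node_local_global_sat_general (n : ℕ) (t : CTree n) (ht : UMem t)
    (φ : Formula) (hφ : φ.IsNNIL) :
    (t.toModel.sat t.root φ ↔ (UnivModel n).sat ⟨t, ht⟩ φ) :=
  ⟨t.sat_univModel_of_sat_root hφ ht,
    KStruct.sat_of_monotonic (w := t.root) hφ (t.monotonic_toUniv ht)⟩

/-- for a node `T_w` of `𝒯(n)` and a NNIL-formula `φ` in `p_0,…,p_{n-1}`,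
`φ` holds at the root of the tree `T_w` iff `φ` holds at the node `T_w` in `𝒯(n)`. -/
theorem univ_node_local_global_sat (n : ℕ) (t : CTree n) (ht : UMem t)
    (φ : Formula) (hφ : φ.IsNNIL) (hv : φ.varsBelow n) :
    (t.toModel.sat t.root φ ↔ (UnivModel n).sat ⟨t, ht⟩ φ) :=
  univ_node_local_global_sat_general n t ht φ hφ
end
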